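/- For every integer n ≥ 1000, C*(n) > 0.0384609. -/
import Mathlib


/-- `N n` is the number of induced 5-cycles in an iterated balanced blow-up of `C5`
on `n` vertices: `N n = 0` for `n ≤ 4`, and for `n = 5k + a` with `0 ≤ a ≤ 4`,
`N n = k^(5-a) (k+1)^a + (5-a) N(k) + a N(k+1)`. -/
def N : ℕ → ℕ
  | n =>
    if h : n ≤ 4 then 0
    else (n / 5) ^ (5 - n % 5) * (n / 5 + 1) ^ (n % 5)
      + (5 - n % 5) * N (n / 5) + (n % 5) * N (n / 5 + 1)
termination_by n => n
decreasing_by all_goals omega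

/-- `C(n) = N(n)/binom(n,5)`. -/
noncomputable def Cdens (n : ℕ) : ℝ := (N n : ℝ) / (n.choose 5 : ℝ)

/-- `C*(n) = (n + 26·n(n−1)(n−2)(n−3)(n−4)·C(n)) / (26 n^5)`. -/
noncomputable def Cstar (n : ℕ) : ℝ :=
  ((n : ℝ) + 26 * (n : ℝ) * ((n : ℝ) - 1) * ((n : ℝ) - 2) * ((n : ℝ) - 3) * ((n : ℝ) - 4)
      * Cdens n) / (26 * (n : ℝ) ^ 5)

private lemma key_step (k a : ℕ) (hk : 1 ≤ k) (ha : a ≤ 4)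
    (h1 : ((k : ℝ)) ^ 5 ≤ 3120 * (N k : ℝ) + (83/5) * (k : ℝ) ^ 3)
    (h2 : ((k : ℝ) + 1) ^ 5 ≤ 3120 * (N (k+1) : ℝ) + (83/5) * ((k : ℝ) + 1) ^ 3) :
    ((5*k+a : ℕ) : ℝ) ^ 5 ≤
      3120 * ((k ^ (5-a) * (k+1) ^ a + (5-a) * N k + a * N (k+1) : ℕ) : ℝ)
      + (83/5) * ((5*k+a : ℕ) : ℝ) ^ 3 := by
  have hk' : (1 : ℝ) ≤ (k : ℝ) := by exact_mod_cast hk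
  interval_cases a <;> push_cast <;>
    nlinarith [h1, h2, mul_nonneg (mul_nonneg (sub_nonneg.2 hk') (sub_nonneg.2 hk'))
      (le_trans zero_le_one hk'), sq_nonneg ((k:ℝ) - 1), pow_pos (lt_of_lt_of_le zero_lt_one hk') 3]

private lemma key (n : ℕ) : ((n : ℝ)) ^ 5 ≤ 3120 * (N n : ℝ) + (83/5) * (n : ℝ) ^ 3 := by
  induction n using Nat.strong_induction_on with
  | _ n ih =>
    by_cases h : n ≤ 4
    · rw [N, dif_pos h]
      interval_cases n <;> norm_num
    · rw [N, dif_neg h]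
      have hk : 1 ≤ n / 5 := by omega
      have hn5 : n = 5 * (n / 5) + n % 5 := by omega
      have ha : n % 5 ≤ 4 := by omega
      have h1 := ih (n / 5) (by omega)
      have h2 := ih (n / 5 + 1) (by omega)
      have := key_step (n / 5) (n % 5) hk ha h1 (by push_cast at h2 ⊢; linarith)
      rw [← hn5] at this
      convert this using 3

/-- For every integer `n ≥ 1000`, `C*(n) > 0.0384609`. -/
theorem cstar_lower_bound (n : ℕ) (hn : 1000 ≤ n) : (0.0384609 : ℝ) < Cstar n := by
  have hn4 : 4 ≤ n := by omega
  have hchoosen : (n.choose 5 : ℝ) ≠ 0 := by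
    have : 0 < n.choose 5 := Nat.choose_pos (by omega)
    positivity
  have hdesc : (n.descFactorial 5 : ℝ) =
      (n : ℝ) * ((n : ℝ) - 1) * ((n : ℝ) - 2) * ((n : ℝ) - 3) * ((n : ℝ) - 4) := by
    have : n.descFactorial 5 = (n-4) * ((n-3) * ((n-2) * ((n-1) * n))) := by
      simp [Nat.descFactorial]
    rw [this]
    push_cast [Nat.cast_sub (by omega : 4 ≤ n), Nat.cast_sub (by omega : 3 ≤ n),
      Nat.cast_sub (by omega : 2 ≤ n), Nat.cast_sub (by omega : 1 ≤ n)]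
    ring
  have hfac : (n.descFactorial 5 : ℝ) = 120 * (n.choose 5 : ℝ) := by
    rw [Nat.descFactorial_eq_factorial_mul_choose]
    push_cast
    norm_num [Nat.factorial]
  have hprod : (n : ℝ) * ((n : ℝ) - 1) * ((n : ℝ) - 2) * ((n : ℝ) - 3) * ((n : ℝ) - 4)
      * Cdens n = 120 * (N n : ℝ) := by
    rw [Cdens, ← hdesc, hfac]
    field_simp
  rw [Cstar]
  have hnum : 26 * (n : ℝ) * ((n : ℝ) - 1) * ((n : ℝ) - 2) * ((n : ℝ) - 3) * ((n : ℝ) - 4)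
      * Cdens n = 3120 * (N n : ℝ) := by
    rw [show 26 * (n : ℝ) * ((n : ℝ) - 1) * ((n : ℝ) - 2) * ((n : ℝ) - 3) * ((n : ℝ) - 4)
      * Cdens n = 26 * ((n : ℝ) * ((n : ℝ) - 1) * ((n : ℝ) - 2) * ((n : ℝ) - 3) * ((n : ℝ) - 4)
      * Cdens n) by ring, hprod]
    ring
  rw [hnum]
  have hnR : (1000 : ℝ) ≤ (n : ℝ) := by exact_mod_cast hn
  have hpos : (0 : ℝ) < 26 * (n : ℝ) ^ 5 := by positivity
  rw [lt_div_iff₀ hpos]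
  have hkey := key n
  nlinarith [hkey, mul_nonneg (mul_nonneg (pow_nonneg (by linarith : (0:ℝ) ≤ (n:ℝ)) 3)
    (by linarith : (0:ℝ) ≤ (n:ℝ) - 1000)) (by linarith : (0:ℝ) ≤ (n:ℝ) + 1000)]
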